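/- Cut set outage formula (Theorem, post-contingency form): under a cut set outage handled by proportional control, the branch flow changes on the surviving lines satisfy f̃_{−F} − f_{−F} = K^F f_F + Σ_{ℓ̂∈F_tie} f_ℓ̂ Σ_{k∈N} α_k D̂^F (e_k − e_{j(ℓ̂)}), where K^F := B_{−F} C_{−F}^T A_{−F} C_F is the generalized line outage distribution factor matrix and D̂^F := B_{−F} C_{−F}^T A_{−F} is the power transfer distribution factor matrix of the post-contingency network. -/

import Mathlib

open Matrix MeasureTheory

variable {n m : ℕ}

/-- Incidence matrix of an oriented network with buses `Fin (n+1)` (bus `Fin.last n` is the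
reference bus) and oriented lines indexed by `Fin m` with endpoint maps `src`, `tgt`. -/
def incM (src tgt : Fin m → Fin (n+1)) : Matrix (Fin (n+1)) (Fin m) ℝ :=
  Matrix.of fun i l => if src l = i then 1 else if tgt l = i then -1 else 0

/-- The matrix `A` built from a Laplacian `L`: its top-left `n × n` block is the inverse of the
reduced Laplacian (obtained by deleting the last row and column) and all other entries are `0`. -/
noncomputable def AmatL (L : Matrix (Fin (n+1)) (Fin (n+1)) ℝ) : Matrix (Fin (n+1)) (Fin (n+1)) ℝ :=
  Matrix.of fun i j =>
    if h : i ≠ Fin.last n ∧ j ≠ Fin.last n then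
      (L.submatrix Fin.castSucc Fin.castSucc)⁻¹ (i.castPred h.1) (j.castPred h.2)
    else 0

/-- The matrix `A` of the network with susceptance vector `b`. -/
noncomputable def Amat (src tgt : Fin m → Fin (n+1)) (b : Fin m → ℝ) : Matrix (Fin (n+1)) (Fin (n+1)) ℝ :=
  AmatL (incM src tgt * Matrix.diagonal b * (incM src tgt)ᵀ)

/-- Power transfer distribution factor `D_{l, k ĵ}`. -/
noncomputable def ptdf (src tgt : Fin m → Fin (n+1)) (b : Fin m → ℝ) (l : Fin m) (k jh : Fin (n+1)) : ℝ :=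
  b l * (Amat src tgt b (src l) k + Amat src tgt b (tgt l) jh
       - Amat src tgt b (src l) jh - Amat src tgt b (tgt l) k)

/-- The underlying simple graph of the network. -/
def netGraph (src tgt : Fin m → Fin (n+1)) : SimpleGraph (Fin (n+1)) :=
  SimpleGraph.fromRel fun a c => ∃ l, src l = a ∧ tgt l = c

/-- There is a simple path in the network from `jh` to `k` that contains line `l`. -/
def PathThrough (src tgt : Fin m → Fin (n+1)) (jh k : Fin (n+1)) (l : Fin m) : Prop :=
  ∃ w : (netGraph src tgt).Walk jh k, w.IsPath ∧ s(src l, tgt l) ∈ w.edges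

/-- Lines `e₁` and `e₂` belong to the same block: they are equal or lie on a common simple cycle. -/
def sameBlock (src tgt : Fin m → Fin (n+1)) (e₁ e₂ : Fin m) : Prop :=
  e₁ = e₂ ∨ ∃ (v : Fin (n+1)) (c : (netGraph src tgt).Walk v v),
    c.IsCycle ∧ s(src e₁, tgt e₁) ∈ c.edges ∧ s(src e₂, tgt e₂) ∈ c.edges

/-- A cut vertex: a vertex whose removal disconnects the graph. -/
def IsCutVertex {V : Type*} (G : SimpleGraph V) (v : V) : Prop :=
  ¬ (G.induce {w : V | w ≠ v}).Connected

/-- The subgraph of the network with only the lines in `S`. -/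
def netGraphOn (src tgt : Fin m → Fin (n+1)) (S : Set (Fin m)) : SimpleGraph (Fin (n+1)) :=
  SimpleGraph.fromRel fun a c => ∃ l ∈ S, src l = a ∧ tgt l = c

def maskIn (F : Finset (Fin m)) (b : Fin m → ℝ) : Fin m → ℝ := fun l => if l ∈ F then b l else 0
def maskOut (F : Finset (Fin m)) (b : Fin m → ℝ) : Fin m → ℝ := fun l => if l ∈ F then 0 else b l

/-- Column submatrix `C_F` (columns outside `F` zeroed out). -/
def CFmat (src tgt : Fin m → Fin (n+1)) (F : Finset (Fin m)) : Matrix (Fin (n+1)) (Fin m) ℝ :=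
  Matrix.of fun i l => if l ∈ F then incM src tgt i l else 0

/-- Column submatrix `C_{−F}` (columns in `F` zeroed out). -/
def CmFmat (src tgt : Fin m → Fin (n+1)) (F : Finset (Fin m)) : Matrix (Fin (n+1)) (Fin m) ℝ :=
  Matrix.of fun i l => if l ∈ F then 0 else incM src tgt i l

/-- Diagonal susceptance matrix `B_F`. -/
def BFmat (b : Fin m → ℝ) (F : Finset (Fin m)) : Matrix (Fin m) (Fin m) ℝ :=
  Matrix.diagonal (maskIn F b)

/-- Diagonal susceptance matrix `B_{−F}`. -/
def BmFmat (b : Fin m → ℝ) (F : Finset (Fin m)) : Matrix (Fin m) (Fin m) ℝ :=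
  Matrix.diagonal (maskOut F b)

/-- The matrix `A_{−F}` of the post-contingency network `(N, E ∖ F)`. -/
noncomputable def AmFmat (src tgt : Fin m → Fin (n+1)) (b : Fin m → ℝ) (F : Finset (Fin m)) :
    Matrix (Fin (n+1)) (Fin (n+1)) ℝ :=
  AmatL (CmFmat src tgt F * BmFmat b F * (CmFmat src tgt F)ᵀ)

/-- The `k`-th standard unit vector of `ℝ^{n+1}`. -/
def evec (k : Fin (n+1)) : Fin (n+1) → ℝ := Pi.single k 1

/-!
Subtracting the pre-contingency balance from the post-contingency one, the angle change
`Δ = θ̃ - θ` satisfies `L_{−F} Δ = C_F f_F + ∑ f_ℓ̂ ∑ α_k (e_k - e_{j(ℓ̂)})`: the pre-contingency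
flows on the surviving lines are `B_{−F} C_{−F}ᵀ θ`, so the tripped flows `f_F` reappear as
injections at their endpoints, and `∑ α_k = 1` turns the tie-line terms into transfers.
The post-contingency Laplacian has zero row sums, and its reduced matrix is invertible because
its quadratic form `∑ b_l (x_{src l} - x_{tgt l})²` vanishes only on vectors that are constant
along the connected surviving network. Hence `A_{−F} L_{−F} Δ = Δ - Δ_n 𝟙`, and
`B_{−F} C_{−F}ᵀ`, which only sees angle differences, maps it to `f̃_{−F} - f_{−F}`.
-/

theorem SimpleGraph.Reachable.eq_of_forall_adj {V α : Type*} {G : SimpleGraph V} {f : V → α}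
    (hf : ∀ u v, G.Adj u v → f u = f v) {u v : V} (huv : G.Reachable u v) : f u = f v := by
  obtain ⟨w⟩ := huv
  induction w with
  | nil => rfl
  | cons hadj _ ih => exact (hf _ _ hadj).trans ih

theorem Matrix.submatrix_castSucc_mulVec {R : Type*} [NonUnitalNonAssocSemiring R]
    (L : Matrix (Fin (n+1)) (Fin (n+1)) R) (y : Fin n → R) (i : Fin n) :
    (L.submatrix Fin.castSucc Fin.castSucc *ᵥ y) i = (L *ᵥ Fin.snoc y 0) i.castSucc := by
  simp [Matrix.mulVec, dotProduct, Fin.sum_univ_castSucc]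

theorem AmatL_mulVec (L : Matrix (Fin (n+1)) (Fin (n+1)) ℝ) (v : Fin (n+1) → ℝ) :
    AmatL L *ᵥ v
      = Fin.snoc ((L.submatrix Fin.castSucc Fin.castSucc)⁻¹ *ᵥ (v ∘ Fin.castSucc)) 0 := by
  funext i
  induction i using Fin.lastCases with
  | last => simp [Matrix.mulVec, dotProduct, AmatL]
  | cast i =>
    simp [Matrix.mulVec, dotProduct, AmatL, Fin.sum_univ_castSucc, (Fin.castSucc_lt_last _).ne]

theorem isUnit_det_submatrix_castSucc {L : Matrix (Fin (n+1)) (Fin (n+1)) ℝ}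
    (hL : ∀ x, x (Fin.last n) = 0 → x ⬝ᵥ L *ᵥ x = 0 → x = 0) :
    IsUnit (L.submatrix Fin.castSucc Fin.castSucc).det := by
  rw [isUnit_iff_ne_zero]
  intro hdet
  obtain ⟨y, hy0, hy⟩ := Matrix.exists_mulVec_eq_zero_iff.mpr hdet
  have hLy : ∀ i : Fin n, (L *ᵥ Fin.snoc y 0) i.castSucc = 0 := fun i => by
    rw [← Matrix.submatrix_castSucc_mulVec]; exact congrFun hy i
  have hzero : Fin.snoc (α := fun _ => ℝ) y 0 = 0 := by
    refine hL _ (Fin.snoc_last _ _) ?_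
    simp [dotProduct, Fin.sum_univ_castSucc, hLy]
  exact hy0 (funext fun i => by simpa using congrFun hzero i.castSucc)

theorem AmatL_mulVec_mulVec {L : Matrix (Fin (n+1)) (Fin (n+1)) ℝ}
    (hrow : L *ᵥ (fun _ => 1) = 0) (hdet : IsUnit (L.submatrix Fin.castSucc Fin.castSucc).det)
    (w : Fin (n+1) → ℝ) :
    AmatL L *ᵥ (L *ᵥ w) = w - fun _ => w (Fin.last n) := by
  have hw : w - (fun _ => w (Fin.last n))
      = Fin.snoc (w ∘ Fin.castSucc - fun _ => w (Fin.last n)) 0 := by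
    funext i
    induction i using Fin.lastCases <;> simp
  have hLw : L *ᵥ w = L *ᵥ (w - fun _ => w (Fin.last n)) := by
    have : (fun _ => w (Fin.last n)) = w (Fin.last n) • (fun _ : Fin (n+1) => (1:ℝ)) := by
      funext; simp
    rw [Matrix.mulVec_sub, this, Matrix.mulVec_smul, hrow, smul_zero, sub_zero]
  have hred : (L *ᵥ w) ∘ Fin.castSucc
      = L.submatrix Fin.castSucc Fin.castSucc *ᵥ (w ∘ Fin.castSucc - fun _ => w (Fin.last n)) := by
    funext i
    rw [Matrix.submatrix_castSucc_mulVec, ← hw, Function.comp_apply, hLw]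
  rw [AmatL_mulVec, hred, Matrix.mulVec_mulVec, Matrix.nonsing_inv_mul _ hdet,
    Matrix.one_mulVec, hw]

def netLaplacian (src tgt : Fin m → Fin (n+1)) (w : Fin m → ℝ) :
    Matrix (Fin (n+1)) (Fin (n+1)) ℝ :=
  incM src tgt * diagonal w * (incM src tgt)ᵀ

section Laplacian

variable {src tgt : Fin m → Fin (n+1)}

theorem incM_transpose_mulVec_apply {l : Fin m} (hl : src l ≠ tgt l) (x : Fin (n+1) → ℝ) :
    ((incM src tgt)ᵀ *ᵥ x) l = x (src l) - x (tgt l) := by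
  have hterm : ∀ i, (incM src tgt)ᵀ l i * x i
      = (if src l = i then x i else 0) - (if tgt l = i then x i else 0) := by
    intro i
    by_cases h₁ : src l = i
    · simp [incM, h₁, show tgt l ≠ i from h₁ ▸ hl.symm]
    · by_cases h₂ : tgt l = i <;> simp [incM, h₁, h₂]
  simp only [Matrix.mulVec, dotProduct, hterm, Finset.sum_sub_distrib, Finset.sum_ite_eq,
    Finset.mem_univ, if_true]

theorem netLaplacian_mulVec_const (hsl : ∀ l, src l ≠ tgt l) (w : Fin m → ℝ) :
    netLaplacian src tgt w *ᵥ (fun _ => 1) = 0 := by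
  have h : (incM src tgt)ᵀ *ᵥ (fun _ => (1 : ℝ)) = 0 :=
    funext fun l => by rw [incM_transpose_mulVec_apply (hsl l), sub_self, Pi.zero_apply]
  rw [netLaplacian, Matrix.mul_assoc, ← Matrix.mulVec_mulVec, ← Matrix.mulVec_mulVec, h,
    Matrix.mulVec_zero, Matrix.mulVec_zero]

theorem dotProduct_netLaplacian_mulVec (hsl : ∀ l, src l ≠ tgt l) (w : Fin m → ℝ)
    (x : Fin (n+1) → ℝ) :
    x ⬝ᵥ netLaplacian src tgt w *ᵥ x = ∑ l, w l * (x (src l) - x (tgt l)) ^ 2 := by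
  rw [netLaplacian, Matrix.mul_assoc, ← Matrix.mulVec_mulVec, Matrix.dotProduct_mulVec,
    ← Matrix.mulVec_transpose, ← Matrix.mulVec_mulVec]
  simp only [dotProduct, Matrix.mulVec_diagonal, incM_transpose_mulVec_apply (hsl _)]
  exact Finset.sum_congr rfl fun l _ => by ring

theorem eq_of_dotProduct_netLaplacian_mulVec_eq_zero (hsl : ∀ l, src l ≠ tgt l)
    {w : Fin m → ℝ} (hw : ∀ l, 0 ≤ w l) {S : Set (Fin m)} (hS : ∀ l ∈ S, 0 < w l)
    (hconn : (netGraphOn src tgt S).Connected) {x : Fin (n+1) → ℝ}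
    (hx : x ⬝ᵥ netLaplacian src tgt w *ᵥ x = 0) (u v : Fin (n+1)) : x u = x v := by
  rw [dotProduct_netLaplacian_mulVec hsl,
    Finset.sum_eq_zero_iff_of_nonneg fun l _ => mul_nonneg (hw l) (sq_nonneg _)] at hx
  have hline : ∀ l ∈ S, x (src l) = x (tgt l) := fun l hl => by
    have := (mul_eq_zero.mp (hx l (Finset.mem_univ l))).resolve_left (hS l hl).ne'
    exact sub_eq_zero.mp (pow_eq_zero_iff two_ne_zero |>.mp this)
  refine (hconn.preconnected u v).eq_of_forall_adj fun a c hadj => ?_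
  rcases (SimpleGraph.fromRel_adj _ _ _).mp hadj |>.2 with ⟨l, hl, rfl, rfl⟩ | ⟨l, hl, rfl, rfl⟩
  · exact hline l hl
  · exact (hline l hl).symm

theorem isUnit_det_submatrix_netLaplacian (hsl : ∀ l, src l ≠ tgt l)
    {w : Fin m → ℝ} (hw : ∀ l, 0 ≤ w l) {S : Set (Fin m)} (hS : ∀ l ∈ S, 0 < w l)
    (hconn : (netGraphOn src tgt S).Connected) :
    IsUnit ((netLaplacian src tgt w).submatrix Fin.castSucc Fin.castSucc).det :=
  isUnit_det_submatrix_castSucc fun x hlast hx => funext fun i => by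
    rw [eq_of_dotProduct_netLaplacian_mulVec_eq_zero hsl hw hS hconn hx i (Fin.last n), hlast,
      Pi.zero_apply]

end Laplacian

theorem sum_smul_sub_of_sum_eq_one {κ M : Type*} [Fintype κ] [AddCommGroup M] [Module ℝ M]
    {α : κ → ℝ} (hα : ∑ k, α k = 1) (v : κ → M) (u : M) :
    ∑ k, α k • (v k - u) = ∑ k, α k • v k - u := by
  simp only [smul_sub, Finset.sum_sub_distrib, ← Finset.sum_smul, hα, one_smul]

section CutSet

variable {src tgt : Fin m → Fin (n+1)} {F : Finset (Fin m)}

theorem CmFmat_mul_BmFmat_mul_transpose (b : Fin m → ℝ) :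
    CmFmat src tgt F * BmFmat b F * (CmFmat src tgt F)ᵀ
      = netLaplacian src tgt (maskOut F b) := by
  ext i j
  rw [netLaplacian, BmFmat, Matrix.mul_apply, Matrix.mul_apply]
  refine Finset.sum_congr rfl fun l _ => ?_
  by_cases hl : l ∈ F <;> simp [Matrix.mul_diagonal, CmFmat, maskOut, hl]

theorem incM_eq_CmFmat_add_CFmat : incM src tgt = CmFmat src tgt F + CFmat src tgt F := by
  ext i l
  by_cases hl : l ∈ F <;> simp [CmFmat, CFmat, hl]

theorem CFmat_mulVec_maskIn (x : Fin m → ℝ) :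
    CFmat src tgt F *ᵥ maskIn F x = CFmat src tgt F *ᵥ x := by
  funext i
  simp only [Matrix.mulVec, dotProduct]
  refine Finset.sum_congr rfl fun l _ => ?_
  by_cases hl : l ∈ F <;> simp [CFmat, maskIn, hl]

theorem CmFmat_mulVec_congr {x y : Fin m → ℝ} (h : ∀ l ∉ F, x l = y l) :
    CmFmat src tgt F *ᵥ x = CmFmat src tgt F *ᵥ y := by
  funext i
  simp only [Matrix.mulVec, dotProduct]
  refine Finset.sum_congr rfl fun l _ => ?_
  by_cases hl : l ∈ F <;> simp [CmFmat, hl, h]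

theorem BmFmat_mul_CmFmat_transpose_mulVec_apply (b : Fin m → ℝ) {l : Fin m} (hl : l ∉ F)
    (hsl : src l ≠ tgt l) (x : Fin (n+1) → ℝ) :
    ((BmFmat b F * (CmFmat src tgt F)ᵀ) *ᵥ x) l = b l * (x (src l) - x (tgt l)) := by
  rw [← incM_transpose_mulVec_apply hsl, ← Matrix.mulVec_mulVec, BmFmat, Matrix.mulVec_diagonal]
  simp [maskOut, hl, Matrix.mulVec, dotProduct, CmFmat]

theorem diagonal_mul_incM_transpose_mulVec_apply (b : Fin m → ℝ) {l : Fin m}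
    (hsl : src l ≠ tgt l) (x : Fin (n+1) → ℝ) :
    ((diagonal b * (incM src tgt)ᵀ) *ᵥ x) l = b l * (x (src l) - x (tgt l)) := by
  rw [← Matrix.mulVec_mulVec, Matrix.mulVec_diagonal, incM_transpose_mulVec_apply hsl]

theorem AmFmat_mulVec_mulVec (hsl : ∀ l, src l ≠ tgt l) {b : Fin m → ℝ} (hb : ∀ l, 0 < b l)
    (hconn : (netGraphOn src tgt {l | l ∉ F}).Connected) (w : Fin (n+1) → ℝ) :
    AmFmat src tgt b F *ᵥ ((CmFmat src tgt F * BmFmat b F * (CmFmat src tgt F)ᵀ) *ᵥ w)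
      = w - fun _ => w (Fin.last n) := by
  have hw : ∀ l, 0 ≤ maskOut F b l := fun l => by
    unfold maskOut; split_ifs <;> simp [(hb l).le]
  have hS : ∀ l ∈ {l | l ∉ F}, 0 < maskOut F b l := fun l (hl : l ∉ F) => by
    simpa [maskOut, hl] using hb l
  rw [AmFmat, CmFmat_mul_BmFmat_mul_transpose]
  exact AmatL_mulVec_mulVec (netLaplacian_mulVec_const hsl _)
    (isUnit_det_submatrix_netLaplacian hsl hw hS hconn) w

theorem CmFmat_mul_BmFmat_mul_transpose_mulVec_sub (hsl : ∀ l, src l ≠ tgt l) (b : Fin m → ℝ)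
    {α : Fin (n+1) → ℝ} (hα1 : ∑ k, α k = 1)
    {ι : Type*} [Fintype ι] (jmap : ι → Fin (n+1)) (ftie : ι → ℝ)
    {p θ θt : Fin (n+1) → ℝ} {f ft : Fin m → ℝ}
    (hpre1 : incM src tgt *ᵥ f = p + ∑ t, ftie t • evec (jmap t))
    (hpre2 : f = (diagonal b * (incM src tgt)ᵀ) *ᵥ θ)
    (hpost1 : CmFmat src tgt F *ᵥ ft = p + (∑ t, ftie t) • ∑ k, α k • evec k)
    (hpost2 : ft = (BmFmat b F * (CmFmat src tgt F)ᵀ) *ᵥ θt) :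
    (CmFmat src tgt F * BmFmat b F * (CmFmat src tgt F)ᵀ) *ᵥ (θt - θ)
      = CFmat src tgt F *ᵥ maskIn F f + ∑ t, ftie t • ∑ k, α k • (evec k - evec (jmap t)) := by
  have hpost : (CmFmat src tgt F * BmFmat b F * (CmFmat src tgt F)ᵀ) *ᵥ θt
      = CmFmat src tgt F *ᵥ ft := by
    rw [hpost2, Matrix.mulVec_mulVec, Matrix.mul_assoc]
  have hpre : (CmFmat src tgt F * BmFmat b F * (CmFmat src tgt F)ᵀ) *ᵥ θ
      = incM src tgt *ᵥ f - CFmat src tgt F *ᵥ maskIn F f := by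
    rw [incM_eq_CmFmat_add_CFmat (F := F), Matrix.add_mulVec, CFmat_mulVec_maskIn,
      add_sub_cancel_right, Matrix.mul_assoc, ← Matrix.mulVec_mulVec]
    refine CmFmat_mulVec_congr fun l hl => ?_
    rw [hpre2, BmFmat_mul_CmFmat_transpose_mulVec_apply b hl (hsl l),
      diagonal_mul_incM_transpose_mulVec_apply b (hsl l)]
  simp only [sum_smul_sub_of_sum_eq_one hα1]
  simp only [Matrix.mulVec_sub, hpost, hpre, hpost1, hpre1, smul_sub, Finset.sum_sub_distrib,
    ← Finset.sum_smul]
  abel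

end CutSet

theorem cutset_outage_formula_general
    {n m : ℕ} (src tgt : Fin m → Fin (n+1)) (hsl : ∀ l, src l ≠ tgt l)
    (b : Fin m → ℝ) (hb : ∀ l, 0 < b l)
    (F : Finset (Fin m))
    (hconnPost : (netGraphOn src tgt {l | l ∉ F}).Connected)
    (α : Fin (n+1) → ℝ) (hα1 : ∑ k, α k = 1)
    (ι : Type) [Fintype ι] (jmap : ι → Fin (n+1)) (ftie : ι → ℝ)
    (p θ θt : Fin (n+1) → ℝ) (f ft : Fin m → ℝ)
    (hpre1 : (incM src tgt).mulVec f = p + ∑ t, ftie t • evec (jmap t))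
    (hpre2 : f = (Matrix.diagonal b * (incM src tgt)ᵀ).mulVec θ)
    (hpost1 : (CmFmat src tgt F).mulVec ft = p + (∑ t, ftie t) • ∑ k, α k • evec k)
    (hpost2 : ft = (BmFmat b F * (CmFmat src tgt F)ᵀ).mulVec θt) :
    ∀ l ∉ F,
      ft l - f l =
        (BmFmat b F * (CmFmat src tgt F)ᵀ * AmFmat src tgt b F * CFmat src tgt F).mulVec
          (maskIn F f) l
        + ∑ t, ftie t * ∑ k, α k *
            (BmFmat b F * (CmFmat src tgt F)ᵀ * AmFmat src tgt b F).mulVec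
              (evec k - evec (jmap t)) l := by
  intro l hl
  have hangles := AmFmat_mulVec_mulVec hsl hb hconnPost (θt - θ)
  rw [CmFmat_mul_BmFmat_mul_transpose_mulVec_sub hsl b hα1 jmap ftie hpre1 hpre2 hpost1 hpost2]
    at hangles
  calc ft l - f l
      = ((BmFmat b F * (CmFmat src tgt F)ᵀ) *ᵥ (θt - θ - fun _ => (θt - θ) (Fin.last n))) l := by
        rw [hpost2, hpre2, BmFmat_mul_CmFmat_transpose_mulVec_apply b hl (hsl l),
          BmFmat_mul_CmFmat_transpose_mulVec_apply b hl (hsl l),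
          diagonal_mul_incM_transpose_mulVec_apply b (hsl l)]
        simp only [Pi.sub_apply]
        ring
    _ = _ := by
        rw [← hangles]
        simp only [Matrix.mulVec_add, Matrix.mulVec_mulVec, Matrix.mulVec_sum, Matrix.mulVec_smul,
          Matrix.mul_assoc, Pi.add_apply, Finset.sum_apply, Pi.smul_apply, smul_eq_mul]

/-- cut set outage formula, post-contingency form. Under a cut set outage
(tripped internal lines `F` and tripped tie lines indexed by `ι`, with endpoints `jmap` and
pre-contingency flows `ftie`) handled by proportional control `α`, the branch flow changes on
the surviving lines satisfy
`f̃_{−F} − f_{−F} = K^F f_F + ∑_{ℓ̂ ∈ F_tie} f_ℓ̂ ∑_k α_k D̂^F (e_k − e_{j(ℓ̂)})`,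
where `K^F = B_{−F} C_{−F}ᵀ A_{−F} C_F` and `D̂^F = B_{−F} C_{−F}ᵀ A_{−F}`. -/
theorem cutset_outage_formula
    {n m : ℕ} (src tgt : Fin m → Fin (n+1)) (hsl : ∀ l, src l ≠ tgt l)
    (b : Fin m → ℝ) (hb : ∀ l, 0 < b l)
    (F : Finset (Fin m))
    (hconnPre : (netGraph src tgt).Connected)
    (hconnPost : (netGraphOn src tgt {l | l ∉ F}).Connected)
    (α : Fin (n+1) → ℝ) (hα0 : ∀ k, 0 ≤ α k) (hα1 : ∑ k, α k = 1)
    (ι : Type) [Fintype ι] (jmap : ι → Fin (n+1)) (ftie : ι → ℝ) (hftie : ∀ t, ftie t ≠ 0)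
    (p θ θt : Fin (n+1) → ℝ) (f ft : Fin m → ℝ)
    (hpre1 : (incM src tgt).mulVec f = p + ∑ t, ftie t • evec (jmap t))
    (hpre2 : f = (Matrix.diagonal b * (incM src tgt)ᵀ).mulVec θ)
    (hpost1 : (CmFmat src tgt F).mulVec ft = p + (∑ t, ftie t) • ∑ k, α k • evec k)
    (hpost2 : ft = (BmFmat b F * (CmFmat src tgt F)ᵀ).mulVec θt) :
    ∀ l ∉ F,
      ft l - f l =
        (BmFmat b F * (CmFmat src tgt F)ᵀ * AmFmat src tgt b F * CFmat src tgt F).mulVec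
          (maskIn F f) l
        + ∑ t, ftie t * ∑ k, α k *
            (BmFmat b F * (CmFmat src tgt F)ᵀ * AmFmat src tgt b F).mulVec
              (evec k - evec (jmap t)) l :=
  cutset_outage_formula_general src tgt hsl b hb F hconnPost α hα1 ι jmap ftie p θ θt f ft hpre1
    hpre2 hpost1 hpost2
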